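/- Under Doeblin's condition S_τ μ ≥ α η for all probability measures μ (with α ∈ (0,1), η a probability measure, τ > 0), the map μ ↦ S_τ μ is a contraction on signed measures with zero total mass: for any two probability measures μ₁, μ₂, ‖S_τ μ₁ − S_τ μ₂‖_TV ≤ (1 − α) ‖μ₁ − μ₂‖_TV. -/

import Mathlib

open MeasureTheory Real
open scoped ENNReal

/-!
Decompose two probability measures as `μᵢ = κ + δ • σᵢ` with a common part `κ` and
probability measures `σᵢ`; the Hahn decomposition gives such a splitting with
`δ ≤ tvDist μ₁ μ₂`. Since `S τ` is linear, `S τ μᵢ = S τ κ + δ • S τ σᵢ`, so the common part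
cancels and `tvDist (S τ μ₁) (S τ μ₂) ≤ δ · tvDist (S τ σ₁) (S τ σ₂)`. Finally, two probability
measures that both dominate `α η` share mass at least `α`, so their distance is at most `1 - α`.
-/

noncomputable def tvDist {Ω : Type*} [MeasurableSpace Ω] (μ ν : Measure Ω) : ℝ :=
  ⨆ E : {E : Set Ω // MeasurableSet E}, |(μ E.1).toReal - (ν E.1).toReal|

section

variable {Ω : Type*} [MeasurableSpace Ω] {μ ν : Measure Ω}

lemma abs_measureReal_sub_le_tvDist [IsFiniteMeasure μ] [IsFiniteMeasure ν] {E : Set Ω}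
    (hE : MeasurableSet E) : |μ.real E - ν.real E| ≤ tvDist μ ν := by
  refine le_ciSup (f := fun E : {E : Set Ω // MeasurableSet E} => |μ.real E - ν.real E|)
    ⟨μ.real .univ + ν.real .univ, ?_⟩ ⟨E, hE⟩
  rintro _ ⟨F, rfl⟩
  have hμ : μ.real F ≤ μ.real .univ := measureReal_mono F.1.subset_univ
  have hν : ν.real F ≤ ν.real .univ := measureReal_mono F.1.subset_univ
  rw [abs_sub_le_iff]
  constructor <;> linarith [measureReal_nonneg (μ := μ) (s := F.1),
    measureReal_nonneg (μ := ν) (s := F.1)]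

lemma tvDist_le {c : ℝ} (h : ∀ E, MeasurableSet E → |μ.real E - ν.real E| ≤ c) :
    tvDist μ ν ≤ c :=
  ciSup_le fun E => h E.1 E.2

lemma tvDist_add_smul_le {κ σ₁ σ₂ : Measure Ω} [IsFiniteMeasure κ] [IsFiniteMeasure σ₁]
    [IsFiniteMeasure σ₂] {δ : ℝ≥0∞} (hδ : δ ≠ ∞) :
    tvDist (κ + δ • σ₁) (κ + δ • σ₂) ≤ δ.toReal * tvDist σ₁ σ₂ := by
  have := σ₁.smul_finite hδ
  have := σ₂.smul_finite hδ
  refine tvDist_le fun E hE => ?_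
  rw [measureReal_add_apply, measureReal_add_apply, measureReal_ennreal_smul_apply,
    measureReal_ennreal_smul_apply, add_sub_add_left_eq_sub, ← mul_sub, abs_mul,
    ENNReal.abs_toReal]
  exact mul_le_mul_of_nonneg_left (abs_measureReal_sub_le_tvDist hE) ENNReal.toReal_nonneg

lemma mul_measureReal_le_of_smul_le {α : ℝ} (hα : 0 ≤ α) {η ν : Measure Ω} [IsFiniteMeasure ν]
    (h : ENNReal.ofReal α • η ≤ ν) (s : Set Ω) : α * η.real s ≤ ν.real s := by
  simpa [measureReal_def, hα] using ENNReal.toReal_mono (measure_ne_top ν s) (h s)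

lemma tvDist_le_one_sub_of_smul_le {α : ℝ} (hα : 0 ≤ α) {η ν₁ ν₂ : Measure Ω}
    [IsProbabilityMeasure η] [IsProbabilityMeasure ν₁] [IsProbabilityMeasure ν₂]
    (h₁ : ENNReal.ofReal α • η ≤ ν₁) (h₂ : ENNReal.ofReal α • η ≤ ν₂) :
    tvDist ν₁ ν₂ ≤ 1 - α := by
  have key : ∀ {ν ν' : Measure Ω} [IsProbabilityMeasure ν] [IsProbabilityMeasure ν'],
      ENNReal.ofReal α • η ≤ ν → ENNReal.ofReal α • η ≤ ν' → ∀ E, MeasurableSet E →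
        ν.real E - ν'.real E ≤ 1 - α := by
    intro ν ν' _ _ h h' E hE
    -- `ν E - ν' E = 1 - ν Eᶜ - ν' E ≤ 1 - α (η Eᶜ + η E) = 1 - α`
    have hc := mul_measureReal_le_of_smul_le hα h Eᶜ
    have hc' := mul_measureReal_le_of_smul_le hα h' E
    have hη := probReal_add_probReal_compl (μ := η) hE
    have hν := probReal_add_probReal_compl (μ := ν) hE
    nlinarith
  exact tvDist_le fun E hE => abs_sub_le_iff.2 ⟨key h₁ h₂ E hE, key h₂ h₁ E hE⟩

lemma exists_eq_add_eq_add_mutuallySingular (μ₁ μ₂ : Measure Ω) [IsFiniteMeasure μ₁]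
    [IsFiniteMeasure μ₂] :
    ∃ κ ρ₁ ρ₂ : Measure Ω, μ₁ = κ + ρ₁ ∧ μ₂ = κ + ρ₂ ∧ ρ₁ ⟂ₘ ρ₂ := by
  obtain ⟨A, hA, hA₁, hA₂⟩ := hahn_decomposition μ₁ μ₂
  have hle₁ : μ₂.restrict A ≤ μ₁.restrict A := Measure.le_iff.2 fun s hs => by
    simpa [Measure.restrict_apply hs] using hA₁ _ (hs.inter hA) Set.inter_subset_right
  have hle₂ : μ₁.restrict Aᶜ ≤ μ₂.restrict Aᶜ := Measure.le_iff.2 fun s hs => by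
    simpa [Measure.restrict_apply hs] using hA₂ _ (hs.inter hA.compl) Set.inter_subset_right
  refine ⟨μ₂.restrict A + μ₁.restrict Aᶜ, μ₁.restrict A - μ₂.restrict A,
    μ₂.restrict Aᶜ - μ₁.restrict Aᶜ, ?_, ?_, ⟨Aᶜ, hA.compl, ?_, ?_⟩⟩
  · rw [add_right_comm, add_comm (μ₂.restrict A), Measure.sub_add_cancel_of_le hle₁,
      Measure.restrict_add_restrict_compl hA]
  · rw [add_assoc, add_comm (μ₁.restrict Aᶜ), Measure.sub_add_cancel_of_le hle₂,
      Measure.restrict_add_restrict_compl hA]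
  · exact nonpos_iff_eq_zero.1 <| (Measure.sub_le Aᶜ).trans_eq <| by simp [hA.compl]
  · exact nonpos_iff_eq_zero.1 <| (Measure.sub_le Aᶜᶜ).trans_eq <| by simp [hA]

lemma exists_isProbabilityMeasure_eq_smul [Nonempty Ω] (ρ : Measure Ω) [IsFiniteMeasure ρ] :
    ∃ σ : Measure Ω, IsProbabilityMeasure σ ∧ ρ = ρ .univ • σ := by
  rcases eq_or_ne ρ 0 with rfl | hρ
  · exact ⟨Measure.dirac (Classical.arbitrary Ω), inferInstance, by simp⟩
  have h0 : ρ .univ ≠ 0 := Measure.measure_univ_ne_zero.2 hρ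
  refine ⟨(ρ .univ)⁻¹ • ρ, ⟨?_⟩, ?_⟩
  · simp [ENNReal.inv_mul_cancel h0 (measure_ne_top ρ _)]
  · rw [smul_smul, ENNReal.mul_inv_cancel h0 (measure_ne_top ρ _), one_smul]

lemma exists_eq_add_smul_of_isProbabilityMeasure (μ₁ μ₂ : Measure Ω) [IsProbabilityMeasure μ₁]
    [IsProbabilityMeasure μ₂] :
    ∃ (κ : Measure Ω) (δ : ℝ≥0∞) (σ₁ σ₂ : Measure Ω), IsProbabilityMeasure σ₁ ∧
      IsProbabilityMeasure σ₂ ∧ μ₁ = κ + δ • σ₁ ∧ μ₂ = κ + δ • σ₂ ∧ δ ≠ ∞ ∧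
      δ.toReal ≤ tvDist μ₁ μ₂ := by
  have := nonempty_of_isProbabilityMeasure μ₁
  obtain ⟨κ, ρ₁, ρ₂, rfl, rfl, A, hA, hρ₁, hρ₂⟩ := exists_eq_add_eq_add_mutuallySingular μ₁ μ₂
  have := isFiniteMeasure_of_le (κ + ρ₁) (Measure.le_add_left le_rfl)
  have := isFiniteMeasure_of_le (κ + ρ₁) (Measure.le_add_right le_rfl)
  have := isFiniteMeasure_of_le (κ + ρ₂) (Measure.le_add_left le_rfl)
  have hmass : ρ₂ .univ = ρ₁ .univ := by
    refine (ENNReal.add_right_inj (measure_ne_top κ .univ)).1 ?_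
    rw [← Measure.add_apply, ← Measure.add_apply, measure_univ, measure_univ]
  obtain ⟨σ₁, hσ₁, hρσ₁⟩ := exists_isProbabilityMeasure_eq_smul ρ₁
  obtain ⟨σ₂, hσ₂, hρσ₂⟩ := exists_isProbabilityMeasure_eq_smul ρ₂
  refine ⟨κ, ρ₁ .univ, σ₁, σ₂, hσ₁, hσ₂, by rw [← hρσ₁], by rw [← hmass, ← hρσ₂],
    measure_ne_top ρ₁ _, ?_⟩
  have hρ₁A : ρ₁.real .univ = ρ₁.real Aᶜ := by
    rw [← measureReal_add_measureReal_compl hA, measureReal_def, hρ₁, ENNReal.toReal_zero,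
      zero_add]
  have hgap := abs_measureReal_sub_le_tvDist (μ := κ + ρ₁) (ν := κ + ρ₂) hA.compl
  rwa [measureReal_add_apply, measureReal_add_apply, measureReal_def ρ₂, hρ₂,
    ENNReal.toReal_zero, add_sub_add_left_eq_sub, sub_zero, abs_of_nonneg measureReal_nonneg,
    ← hρ₁A] at hgap

end

/-- Under Doeblin's condition `S τ μ ≥ α η` for all probability
measures `μ`, the map `μ ↦ S τ μ` is a contraction with factor `1 − α` on differences of
probability measures (zero-mass signed measures), in total variation. -/
theorem doeblin_contraction
    {Ω : Type*} [MeasurableSpace Ω]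
    (S : ℝ → Measure Ω → Measure Ω)
    (hSlin : ∀ t : ℝ, 0 ≤ t → ∀ (a b : ℝ≥0∞) (μ ν : Measure Ω),
      S t (a • μ + b • ν) = a • S t μ + b • S t ν)
    (hMarkov : ∀ t : ℝ, 0 ≤ t → ∀ μ : Measure Ω,
      IsProbabilityMeasure μ → IsProbabilityMeasure (S t μ))
    (α : ℝ) (hα : α ∈ Set.Ioo (0:ℝ) 1)
    (η : Measure Ω) [IsProbabilityMeasure η]
    (τ : ℝ) (hτ : 0 < τ)
    (hDoeblin : ∀ μ : Measure Ω, IsProbabilityMeasure μ →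
      ENNReal.ofReal α • η ≤ S τ μ) :
    ∀ μ₁ μ₂ : Measure Ω, IsProbabilityMeasure μ₁ → IsProbabilityMeasure μ₂ →
      tvDist (S τ μ₁) (S τ μ₂) ≤ (1 - α) * tvDist μ₁ μ₂ := by
  intro μ₁ μ₂ hμ₁ _
  obtain ⟨κ, δ, σ₁, σ₂, hσ₁, hσ₂, rfl, rfl, hδ, hδtv⟩ :=
    exists_eq_add_smul_of_isProbabilityMeasure μ₁ μ₂
  have hS : ∀ σ, S τ (κ + δ • σ) = S τ κ + δ • S τ σ := fun σ => by
    simpa using hSlin τ hτ.le 1 δ κ σ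
  have := hMarkov τ hτ.le _ hμ₁
  have := hMarkov τ hτ.le σ₁ hσ₁
  have := hMarkov τ hτ.le σ₂ hσ₂
  have : IsFiniteMeasure (S τ κ) :=
    isFiniteMeasure_of_le (S τ (κ + δ • σ₁)) (hS σ₁ ▸ Measure.le_add_right le_rfl)
  calc tvDist (S τ (κ + δ • σ₁)) (S τ (κ + δ • σ₂))
      ≤ δ.toReal * tvDist (S τ σ₁) (S τ σ₂) := by rw [hS, hS]; exact tvDist_add_smul_le hδ
    _ ≤ δ.toReal * (1 - α) := by
      gcongr
      exact tvDist_le_one_sub_of_smul_le hα.1.le (hDoeblin σ₁ hσ₁) (hDoeblin σ₂ hσ₂)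
    _ ≤ (1 - α) * tvDist (κ + δ • σ₁) (κ + δ • σ₂) := by
      rw [mul_comm]; exact mul_le_mul_of_nonneg_left hδtv (by linarith [hα.2])
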